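/- Let A_n, B_n be finite groups (n ∈ ℕ) and M_n = A_n ⋉ B_n a semidirect product with B_n normal. For each n let b_{n,1}, …, b_{n,k} ∈ B_n be such that M_n is generated by A_n together with the sets of commutators [A_n, b_{n,s}] = {[a, b_{n,s}] : a ∈ A_n} for s = 1, …, k. Suppose X = ⟨x_1, …, x_m⟩ is a frame subgroup of ∏_{n=1}^∞ A_n; regard X as a subgroup of 𝔐 := ∏_{n=1}^∞ M_n, and set b_s := (b_{n,s})_n ∈ 𝔐 for s = 1, …, k. Then the subgroup Z = ⟨X, [x_j, b_s] : 1 ≤ j ≤ m, 1 ≤ s ≤ k⟩ of 𝔐 is a frame for 𝔐. -/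

import Mathlib

/-!
Write `ι = piMap e` and `Z = ⟨ι X, [ι (x j), c s]⟩`. Since `[y, c] = y⁻¹ (c⁻¹ y c)`, the `y ∈ Z`
with `c⁻¹ y c ∈ Z` form a subgroup, so conjugation by `c s` maps `ι X` into `Z`. With the frame
property of `X` this puts every single-coordinate element of `M i = ⟨A i, [A i, c s i]⟩`, hence
all of `⊕ M i`, into `Z`.

Given `H` of finite index in `Z`, the `y ∈ X` with `ι y ∈ H` and `(c s)⁻¹ (ι y) (c s) ∈ H` for
all `s` form a finite-index subgroup of `X`, which contains some `X_V`. Killing the coordinates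
in `V` is an endomorphism of `∏ M i` commuting with `ι` and with conjugation by `c s`; it maps
`Z` into `H` and fixes `Z_V` pointwise, so `Z_V ≤ H`.
-/

/-- A subgroup `G` of a Cartesian product `∏ i, S i` of finite groups is a *frame* if it is
finitely generated, contains the restricted direct sum (all elements with finite support),
and every finite-index subgroup of `G` contains a principal congruence subgroup
`G ∩ ker(∏ i, S i → ∏ i ∈ V, S i)` for some finite set `V` of indices. -/
def IsFrame {ι : Type*} {S : ι → Type*} [∀ i, Group (S i)]
    (G : Subgroup (∀ i, S i)) : Prop :=
  G.FG ∧
  (∀ x : ∀ i, S i, {i | x i ≠ 1}.Finite → x ∈ G) ∧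
  (∀ H : Subgroup G, H.FiniteIndex →
    ∃ V : Finset ι, ∀ g : G, (∀ i ∈ V, (g : ∀ i, S i) i = 1) → g ∈ H)

open Subgroup Set

instance Subgroup.finiteIndex_comap {G G' : Type*} [Group G] [Group G'] (H : Subgroup G')
    [H.FiniteIndex] (f : G →* G') : (H.comap f).FiniteIndex :=
  ⟨by rw [index_comap]; exact isFiniteRelIndex_of_finiteIndex.relIndex_ne_zero⟩

theorem Subgroup.conj_mem_of_mem_closure {G : Type*} [Group G] {Z : Subgroup G} {s : Set G}
    {c : G} (hs : s ⊆ Z) (hc : ∀ y ∈ s, y⁻¹ * c⁻¹ * y * c ∈ Z) {y : G} (hy : y ∈ closure s) :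
    c⁻¹ * y * c ∈ Z := by
  suffices closure s ≤ Z ⊓ Z.comap (MulAut.conj c⁻¹).toMonoidHom by
    simpa using (this hy).2
  refine (closure_le _).2 fun y hy => ⟨hs hy, ?_⟩
  have := (Z.mul_mem_cancel_left (inv_mem (hs hy))).1 (by simpa [mul_assoc] using hc y hy)
  simpa [mul_assoc] using this

namespace Pi

variable {ι : Type*} [DecidableEq ι] {S : ι → Type*} [∀ i, Group (S i)]

def truncate (V : Finset ι) : (∀ i, S i) →* ∀ i, S i :=
  MonoidHom.piMap fun i => if i ∈ V then 1 else MonoidHom.id (S i)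

theorem truncate_apply (V : Finset ι) (g : ∀ i, S i) (i : ι) :
    truncate V g i = if i ∈ V then 1 else g i := by
  simp only [truncate, MonoidHom.piMap_apply]
  split_ifs <;> rfl

theorem truncate_eq_self {V : Finset ι} {g : ∀ i, S i} (hg : ∀ i ∈ V, g i = 1) :
    truncate V g = g := by
  funext i
  rw [truncate_apply]
  split_ifs with hi
  exacts [(hg i hi).symm, rfl]

theorem truncate_conj (V : Finset ι) (c g : ∀ i, S i) :
    truncate V (c⁻¹ * g * c) = c⁻¹ * truncate V g * c := by
  funext i
  simp only [truncate_apply, mul_apply, inv_apply]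
  split_ifs <;> group

theorem piMap_truncate {A : ι → Type*} [∀ i, Group (A i)] (e : ∀ i, A i →* S i)
    (V : Finset ι) (y : ∀ i, A i) :
    MonoidHom.piMap e (truncate V y) = truncate V (MonoidHom.piMap e y) := by
  funext i
  simp only [MonoidHom.piMap_apply, truncate_apply]
  split_ifs <;> simp

theorem mulSingle_commutator (i : ι) (a : S i) (c : ∀ i, S i) :
    mulSingle i (a⁻¹ * (c i)⁻¹ * a * c i) = (mulSingle i a)⁻¹ * c⁻¹ * mulSingle i a * c := by
  funext j
  obtain rfl | hj := eq_or_ne j i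
  · simp
  · simp [mulSingle_eq_of_ne hj]

end Pi

namespace IsFrame

variable {ι : Type*} [DecidableEq ι] {S : ι → Type*} [∀ i, Group (S i)] {G : Subgroup (∀ i, S i)}

theorem mulSingle_mem (hG : IsFrame G) (i : ι) (a : S i) : Pi.mulSingle i a ∈ G :=
  hG.2.1 _ ((Set.finite_singleton i).subset fun j hj => by
    by_contra h
    exact hj (Pi.mulSingle_eq_of_ne h a))

theorem truncate_mem (hG : IsFrame G) (V : Finset ι) {g : ∀ i, S i} (hg : g ∈ G) :
    Pi.truncate V g ∈ G := by
  have hsupp : {i | (g⁻¹ * Pi.truncate V g) i ≠ 1}.Finite := V.finite_toSet.subset fun i hi => by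
    by_contra h
    exact hi (by simp [Pi.truncate_apply, Finset.mem_coe.not.1 h])
  simpa using mul_mem hg (hG.2.1 _ hsupp)

end IsFrame

section CommutatorExtension

variable {ι : Type*} {A M : ι → Type*} [∀ i, Group (A i)] [∀ i, Group (M i)] {J T : Type*}
  (e : ∀ i, A i →* M i) (x : J → ∀ i, A i) (c : T → ∀ i, M i)

def commutatorExtension : Subgroup (∀ i, M i) :=
  (closure (range x)).map (MonoidHom.piMap e) ⊔
    closure {z | ∃ j s, z = (MonoidHom.piMap e (x j))⁻¹ * (c s)⁻¹ * MonoidHom.piMap e (x j) * c s}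

variable {e x c}

theorem piMap_mem_commutatorExtension {y : ∀ i, A i} (hy : y ∈ closure (range x)) :
    MonoidHom.piMap e y ∈ commutatorExtension e x c :=
  le_sup_left (a := (closure (range x)).map (MonoidHom.piMap e)) ⟨y, hy, rfl⟩

theorem conj_piMap_mem_commutatorExtension {y : ∀ i, A i} (hy : y ∈ closure (range x)) (s : T) :
    (c s)⁻¹ * MonoidHom.piMap e y * c s ∈ commutatorExtension e x c := by
  refine conj_mem_of_mem_closure (s := MonoidHom.piMap e '' range x) ?_ ?_
    (by rw [← MonoidHom.map_closure]; exact ⟨y, hy, rfl⟩)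
  · rintro _ ⟨y, hy, rfl⟩
    exact piMap_mem_commutatorExtension (subset_closure hy)
  · rintro _ ⟨_, ⟨j, rfl⟩, rfl⟩
    exact le_sup_right (a := (closure (range x)).map (MonoidHom.piMap e))
      (subset_closure ⟨j, s, rfl⟩)

theorem commutatorExtension_fg [Finite J] [Finite T] : (commutatorExtension e x c).FG := by
  refine (fg_iff _).2 ⟨MonoidHom.piMap e '' range x ∪
    range fun p : J × T => (MonoidHom.piMap e (x p.1))⁻¹ * (c p.2)⁻¹ *
      MonoidHom.piMap e (x p.1) * c p.2, ?_, ((finite_range x).image _).union (finite_range _)⟩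
  rw [Subgroup.closure_union, ← MonoidHom.map_closure, commutatorExtension]
  congr 2
  ext z
  simp [eq_comm]

theorem mulSingle_mem_commutatorExtension [DecidableEq ι]
    (hgen : ∀ i, closure (range (e i) ∪
      ⋃ s, {z | ∃ a, z = (e i a)⁻¹ * (c s i)⁻¹ * e i a * c s i}) = ⊤)
    (hX : IsFrame (closure (range x))) (i : ι) (g : M i) :
    Pi.mulSingle i g ∈ commutatorExtension e x c := by
  have hsingle : ∀ a, Pi.mulSingle i (e i a) = MonoidHom.piMap e (Pi.mulSingle i a) := fun a =>
    funext fun j => (Pi.apply_mulSingle (fun j => e j) (fun j => map_one _) i a j).symm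
  suffices closure (range (e i) ∪ ⋃ s, {z | ∃ a, z = (e i a)⁻¹ * (c s i)⁻¹ * e i a * c s i}) ≤
      (commutatorExtension e x c).comap (MonoidHom.mulSingle M i) by
    exact this (hgen i ▸ mem_top g)
  rw [closure_le, union_subset_iff, iUnion_subset_iff]
  refine ⟨?_, fun s => ?_⟩
  · rintro _ ⟨a, rfl⟩
    simp only [SetLike.mem_coe, mem_comap, MonoidHom.mulSingle_apply, hsingle]
    exact piMap_mem_commutatorExtension (hX.mulSingle_mem i a)
  · rintro _ ⟨a, rfl⟩
    simp only [SetLike.mem_coe, mem_comap, MonoidHom.mulSingle_apply, Pi.mulSingle_commutator,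
      hsingle]
    have ha := hX.mulSingle_mem i a
    simpa only [mul_assoc] using mul_mem (inv_mem (piMap_mem_commutatorExtension (c := c) ha))
      (conj_piMap_mem_commutatorExtension ha s)

theorem mem_commutatorExtension_of_finite
    (hgen : ∀ i, closure (range (e i) ∪
      ⋃ s, {z | ∃ a, z = (e i a)⁻¹ * (c s i)⁻¹ * e i a * c s i}) = ⊤)
    (hX : IsFrame (closure (range x))) {g : ∀ i, M i} (hg : {i | g i ≠ 1}.Finite) :
    g ∈ commutatorExtension e x c := by
  classical
  exact Submonoid.pi_mem_of_mulSingle_mem_aux hg.toFinset g (fun i hi => by simpa using hi)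
    fun i _ => mulSingle_mem_commutatorExtension hgen hX i (g i)

theorem commutatorExtension_le_comap_truncate [DecidableEq ι] {V : Finset ι}
    {H : Subgroup (∀ i, M i)}
    (hH : ∀ y ∈ closure (range x), MonoidHom.piMap e (Pi.truncate V y) ∈ H ∧
      ∀ s, (c s)⁻¹ * MonoidHom.piMap e (Pi.truncate V y) * c s ∈ H) :
    commutatorExtension e x c ≤ H.comap (Pi.truncate V) := by
  refine sup_le ?_ ((closure_le _).2 ?_)
  · rintro _ ⟨y, hy, rfl⟩
    simpa [mem_comap, Pi.piMap_truncate] using (hH y hy).1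
  · rintro _ ⟨j, s, rfl⟩
    obtain ⟨hu, hconj⟩ := hH (x j) (subset_closure ⟨j, rfl⟩)
    set u := MonoidHom.piMap e (x j)
    have hsplit : u⁻¹ * (c s)⁻¹ * u * c s = u⁻¹ * ((c s)⁻¹ * u * c s) := by group
    rw [SetLike.mem_coe, mem_comap, hsplit, map_mul, map_inv, Pi.truncate_conj,
      ← Pi.piMap_truncate]
    exact mul_mem (inv_mem hu) (hconj s)

theorem commutatorExtension_congruence [Finite T] (hX : IsFrame (closure (range x)))
    (H : Subgroup (commutatorExtension e x c)) [H.FiniteIndex] :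
    ∃ V : Finset ι, ∀ g : commutatorExtension e x c, (∀ i ∈ V, (g : ∀ i, M i) i = 1) → g ∈ H := by
  classical
  let Z := commutatorExtension e x c
  let f : closure (range x) →* Z :=
    ((MonoidHom.piMap e).comp (closure (range x)).subtype).codRestrict Z
      fun y => piMap_mem_commutatorExtension y.2
  let conj : T → closure (range x) →* Z := fun s =>
    ((MulAut.conj (c s)⁻¹).toMonoidHom.comp
      ((MonoidHom.piMap e).comp (closure (range x)).subtype)).codRestrict Z
      fun y => by simpa using conj_piMap_mem_commutatorExtension y.2 s
  obtain ⟨V, hV⟩ := hX.2.2 (H.comap f ⊓ ⨅ s, H.comap (conj s))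
    (have := finiteIndex_iInf fun s => H.finiteIndex_comap (conj s); inferInstance)
  have hle : Z ≤ (H.map Z.subtype).comap (Pi.truncate V) :=
    commutatorExtension_le_comap_truncate fun y hy => by
      have hK := hV ⟨Pi.truncate V y, hX.truncate_mem V hy⟩ fun i hi => by
        simp [Pi.truncate_apply, hi]
      simp only [mem_inf, mem_iInf, mem_comap] at hK
      exact ⟨⟨f _, hK.1, rfl⟩, fun s => ⟨conj s _, hK.2 s, by simp [conj]⟩⟩
  refine ⟨V, fun g hg => ?_⟩
  have hg' := hle g.2
  rw [mem_comap, Pi.truncate_eq_self hg] at hg'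
  exact (mem_map_iff_mem (subtype_injective Z)).1 hg'

theorem isFrame_commutatorExtension [Finite J] [Finite T]
    (hgen : ∀ i, closure (range (e i) ∪
      ⋃ s, {z | ∃ a, z = (e i a)⁻¹ * (c s i)⁻¹ * e i a * c s i}) = ⊤)
    (hX : IsFrame (closure (range x))) : IsFrame (commutatorExtension e x c) :=
  ⟨commutatorExtension_fg, fun _ => mem_commutatorExtension_of_finite hgen hX,
    fun H _ => commutatorExtension_congruence hX H⟩

end CommutatorExtension

theorem frame_extension_semidirect_general
    (A B : ℕ → Type) [∀ n, Group (A n)] [∀ n, Group (B n)]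
    (φ : ∀ n, A n →* MulAut (B n)) (k m : ℕ) (b : ∀ n, Fin k → B n)
    (hgen : ∀ n, Subgroup.closure
      ((Set.range ⇑(SemidirectProduct.inr : A n →* B n ⋊[φ n] A n)) ∪
        ⋃ s : Fin k, {z : B n ⋊[φ n] A n | ∃ a : A n,
          z = (SemidirectProduct.inr a)⁻¹ * (SemidirectProduct.inl (b n s))⁻¹ *
              SemidirectProduct.inr a * SemidirectProduct.inl (b n s)}) = ⊤)
    (x : Fin m → ∀ n, A n)
    (hX : IsFrame (Subgroup.closure (Set.range x)))
    (ι : (∀ n, A n) →* ∀ n, B n ⋊[φ n] A n)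
    (hι : ∀ y n, ι y n = SemidirectProduct.inr (y n))
    (bb : Fin k → ∀ n, B n ⋊[φ n] A n)
    (hbb : ∀ s n, bb s n = SemidirectProduct.inl (b n s)) :
    IsFrame ((Subgroup.closure (Set.range x)).map ι ⊔
      Subgroup.closure {z : ∀ n, B n ⋊[φ n] A n | ∃ (j : Fin m) (s : Fin k),
        z = (ι (x j))⁻¹ * (bb s)⁻¹ * ι (x j) * bb s}) := by
  obtain rfl : ι = MonoidHom.piMap fun n => SemidirectProduct.inr :=
    MonoidHom.ext fun y => funext (hι y)
  obtain rfl : bb = fun s n => SemidirectProduct.inl (b n s) := funext fun s => funext (hbb s)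
  exact isFrame_commutatorExtension hgen hX

/-- **Lemma (Kassabov–Nikolov).**  Let `M n = A n ⋉ B n` be semidirect products of finite
groups (with `B n` normal), and let `b n 1, …, b n k ∈ B n` be such that `M n` is generated
by `A n` together with the commutator sets `[A n, b n s] = {a⁻¹ * (b n s)⁻¹ * a * (b n s)}`.
If `X = ⟨x 1, …, x m⟩` is a frame subgroup of `∏ n, A n`, regarded inside
`𝔐 = ∏ n, M n` via the coordinatewise inclusion `ι`, and `bb s = (b n s)_n ∈ 𝔐`, then
`Z = ⟨X, [x j, bb s] (1 ≤ j ≤ m, 1 ≤ s ≤ k)⟩` is a frame for `𝔐`. -/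
theorem frame_extension_semidirect
    (A B : ℕ → Type) [∀ n, Group (A n)] [∀ n, Group (B n)]
    [∀ n, Finite (A n)] [∀ n, Finite (B n)]
    (φ : ∀ n, A n →* MulAut (B n)) (k m : ℕ) (b : ∀ n, Fin k → B n)
    (hgen : ∀ n, Subgroup.closure
      ((Set.range ⇑(SemidirectProduct.inr : A n →* B n ⋊[φ n] A n)) ∪
        ⋃ s : Fin k, {z : B n ⋊[φ n] A n | ∃ a : A n,
          z = (SemidirectProduct.inr a)⁻¹ * (SemidirectProduct.inl (b n s))⁻¹ *
              SemidirectProduct.inr a * SemidirectProduct.inl (b n s)}) = ⊤)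
    (x : Fin m → ∀ n, A n)
    (hX : IsFrame (Subgroup.closure (Set.range x)))
    (ι : (∀ n, A n) →* ∀ n, B n ⋊[φ n] A n)
    (hι : ∀ y n, ι y n = SemidirectProduct.inr (y n))
    (bb : Fin k → ∀ n, B n ⋊[φ n] A n)
    (hbb : ∀ s n, bb s n = SemidirectProduct.inl (b n s)) :
    IsFrame ((Subgroup.closure (Set.range x)).map ι ⊔
      Subgroup.closure {z : ∀ n, B n ⋊[φ n] A n | ∃ (j : Fin m) (s : Fin k),
        z = (ι (x j))⁻¹ * (bb s)⁻¹ * ι (x j) * bb s}) :=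
  frame_extension_semidirect_general A B φ k m b hgen x hX ι hι bb hbb
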